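/- arXiv:1912.03796 — 9 statements merged into one kernel-verified Lean document; each statement's English description precedes it below -/
import Mathlib

section
/- Let X be a topological space with at least one infinite ω-cover. Then for every positive integer k, if an ω-cover U of X is partitioned into k pieces U = U₁ ∪ ⋯ ∪ U_k, then at least one of the pieces U_i is an ω-cover of X. -/
/-- A family `U` of open subsets of `X` is an ω-cover if `X ∉ U`, every member is open,
and every finite subset of `X` is contained in some member of `U`. -/
def IsOmegaCover {X : Type*} [TopologicalSpace X] (U : Set (Set X)) : Prop :=
  Set.univ ∉ U ∧ (∀ W ∈ U, IsOpen W) ∧ ∀ F : Set X, F.Finite → ∃ W ∈ U, F ⊆ W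

/-- If a space has an infinite ω-cover, then whenever an ω-cover is partitioned into
finitely many pieces, one of the pieces is an ω-cover. -/
theorem stmt0 {X : Type*} [TopologicalSpace X]
    (hinf : ∃ U : Set (Set X), IsOmegaCover U ∧ U.Infinite)
    (k : ℕ) (hk : 0 < k)
    (U : Set (Set X)) (hU : IsOmegaCover U)
    (P : Fin k → Set (Set X)) (hP : U = ⋃ i, P i) :
    ∃ i, IsOmegaCover (P i) := by
  obtain ⟨huniv, hopen, hcov⟩ := hU
  by_contra h
  push_neg at h
  have hsub : ∀ i, P i ⊆ U := fun i => hP ▸ Set.subset_iUnion P i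
  have hfail : ∀ i, ∃ F : Set X, F.Finite ∧ ∀ W ∈ P i, ¬ F ⊆ W := by
    intro i
    have := h i
    unfold IsOmegaCover at this
    push_neg at this
    obtain ⟨F, hF, hFW⟩ := this (fun hu => huniv (hsub i hu))
      (fun W hW => hopen W (hsub i hW))
    exact ⟨F, hF, hFW⟩
  choose F hFfin hFbad using hfail
  obtain ⟨W, hWU, hWsub⟩ := hcov (⋃ i, F i) (Set.finite_iUnion hFfin)
  rw [hP] at hWU
  obtain ⟨i, hi⟩ := Set.mem_iUnion.mp hWU
  exact hFbad i W hi ((Set.subset_iUnion F i).trans hWsub)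
end

section
/- Let X be a topological space. Assume that for every sequence (U_n : n ∈ ℕ) of ω-covers of X there exist a positive integer k and finite subsets F_n ⊆ U_n with |F_n| ≤ k for each n such that ⋃_n F_n is an ω-cover of X. Then X satisfies S₁(Ω,Ω): for every sequence (U_n) of ω-covers of X one can choose a single element T_n ∈ U_n for each n so that {T_n : n ∈ ℕ} is an ω-cover of X. -/
/-- If from each sequence of ω-covers one can select uniformly bounded finite subfamilies
whose union is an ω-cover, then `S₁(Ω,Ω)` holds. -/
theorem stmt2 {X : Type*} [TopologicalSpace X]
    (hinf : ∃ U : Set (Set X), IsOmegaCover U ∧ U.Infinite)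
    (hbdd : ∀ U : ℕ → Set (Set X), (∀ n, IsOmegaCover (U n)) →
      ∃ k : ℕ, 0 < k ∧ ∃ F : ℕ → Set (Set X),
        (∀ n, F n ⊆ U n ∧ (F n).Finite ∧ (F n).ncard ≤ k) ∧
        IsOmegaCover (⋃ n, F n)) :
    ∀ U : ℕ → Set (Set X), (∀ n, IsOmegaCover (U n)) →
      ∃ T : ℕ → Set X, (∀ n, T n ∈ U n) ∧ IsOmegaCover {W | ∃ n, T n = W} := by
  classical
  intro U hU
  -- the "finite intersection" covers
  set V : ℕ → Set (Set X) := fun n =>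
    { W | ∃ G : Set (Set X), G.Finite ∧ G.Nonempty ∧ G ⊆ U n ∧ W = ⋂₀ G } with hVdef
  have hV : ∀ n, IsOmegaCover (V n) := by
    intro n
    obtain ⟨hu, ho, hc⟩ := hU n
    refine ⟨?_, ?_, ?_⟩
    · rintro ⟨G, hGf, ⟨W, hW⟩, hGU, hEq⟩
      have hWuniv : W = Set.univ := by
        apply Set.eq_univ_of_univ_subset
        rw [hEq]
        exact Set.sInter_subset_of_mem hW
      exact hu (hWuniv ▸ hGU hW)
    · rintro W ⟨G, hGf, _, hGU, rfl⟩
      exact hGf.isOpen_sInter fun w hw => ho w (hGU hw)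
    · intro F hF
      obtain ⟨W, hWU, hFW⟩ := hc F hF
      exact ⟨W, ⟨{W}, Set.finite_singleton W, ⟨W, rfl⟩, by simpa,
        (Set.sInter_singleton W).symm⟩, hFW⟩
  obtain ⟨k, hk, F, hF, hcov⟩ := hbdd V hV
  -- a default element of each V n
  have hVne : ∀ n, (V n).Nonempty := by
    intro n
    obtain ⟨W, hW, -⟩ := (hV n).2.2 ∅ Set.finite_empty
    exact ⟨W, hW⟩
  choose d hd using hVne
  -- enumerate each F n by Fin k (with padding)
  have hg : ∀ n, ∃ g : Fin k → Set X, (∀ i, g i ∈ V n) ∧ F n ⊆ Set.range g := by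
    intro n
    obtain ⟨hsub, hfin, hcard⟩ := hF n
    rcases Set.eq_empty_or_nonempty (F n) with h | hne
    · exact ⟨fun _ => d n, fun _ => hd n, by simp [h]⟩
    · haveI : Fintype (F n) := hfin.fintype
      haveI : Nonempty (F n) := hne.to_subtype
      have hcard' : Fintype.card (F n) ≤ Fintype.card (Fin k) := by
        rw [Fintype.card_fin, ← Nat.card_eq_fintype_card, Nat.card_coe_set_eq]
        exact hcard
      obtain ⟨e⟩ := Function.Embedding.nonempty_of_card_le hcard'
      refine ⟨fun i => ((Function.invFun e i : F n) : Set X), ?_, ?_⟩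
      · intro i
        exact hsub (Function.invFun e i).2
      · intro x hx
        refine ⟨e ⟨x, hx⟩, ?_⟩
        show ((Function.invFun e (e ⟨x, hx⟩) : F n) : Set X) = x
        rw [Function.leftInverse_invFun e.injective ⟨x, hx⟩]
  choose g hg1 hg2 using hg
  -- pigeonhole: one of the k "columns" is an ω-cover
  have hA : ∃ i : Fin k, IsOmegaCover (Set.range fun n => g n i) := by
    by_contra h
    push_neg at h
    have h1 : ∀ i : Fin k, Set.univ ∉ Set.range fun n => g n i := by
      rintro i ⟨n, hn⟩
      exact (hV n).1 (hn ▸ hg1 n i)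
    have h2 : ∀ i : Fin k, ∀ W ∈ Set.range fun n => g n i, IsOpen W := by
      rintro i W ⟨n, rfl⟩
      exact (hV n).2.1 _ (hg1 n i)
    have h3 : ∀ i : Fin k, ∃ S : Set X, S.Finite ∧
        ∀ W ∈ Set.range fun n => g n i, ¬ S ⊆ W := by
      intro i
      by_contra hc
      push_neg at hc
      exact h i ⟨h1 i, h2 i, fun S hS => by
        obtain ⟨W, hW, hSW⟩ := hc S hS
        exact ⟨W, hW, hSW⟩⟩
    choose S hSfin hS using h3
    have hTfin : (⋃ i, S i).Finite := Set.finite_iUnion hSfin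
    obtain ⟨W, hW, hTW⟩ := hcov.2.2 _ hTfin
    obtain ⟨n, hn⟩ := Set.mem_iUnion.mp hW
    obtain ⟨i, hi⟩ := hg2 n hn
    exact hS i W ⟨n, hi⟩ ((Set.subset_iUnion S i).trans hTW)
  obtain ⟨i, hAi⟩ := hA
  -- pick one member of U n containing g n i
  have hpick : ∀ n, ∃ T ∈ U n, g n i ⊆ T := by
    intro n
    obtain ⟨G, hGf, ⟨W, hW⟩, hGU, hEq⟩ := hg1 n i
    exact ⟨W, hGU hW, hEq ▸ Set.sInter_subset_of_mem hW⟩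
  choose T hT1 hT2 using hpick
  refine ⟨T, hT1, ?_, ?_, ?_⟩
  · rintro ⟨n, hn⟩
    exact (hU n).1 (hn ▸ hT1 n)
  · rintro W ⟨n, rfl⟩
    exact (hU n).2.1 _ (hT1 n)
  · intro S hS
    obtain ⟨W, ⟨n, rfl⟩, hSW⟩ := hAi.2.2 S hS
    exact ⟨T n, ⟨n, rfl⟩, hSW.trans (hT2 n)⟩
end

section
/- Let X be an uncountable set. Define, for each countably infinite subset F of X, the set U_F = Δ_X ∪ ((X \ F) × X), where Δ_X = {(x,x) : x ∈ X}. Let Ψ be the filter on X × X generated by {U_F : F a countably infinite subset of X}. Then: (a) Ψ is a quasi-uniformity on X; (b) the topology generated by Ψ is the discrete topology on X; (c) for every sequence (V_n : n ∈ ℕ) of elements of Ψ there exist points x_n ∈ X such that {V_n(x_n) : n ∈ ℕ} covers X. -/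
/-- The basic entourage associated to a subset `F` of `X`:
`Δ_X ∪ ((X \ F) × X)`. -/
def entourage {X : Type*} (F : Set X) : Set (X × X) :=
  {p : X × X | p.1 = p.2} ∪ (Fᶜ ×ˢ (Set.univ : Set X))

/-- The filter on `X × X` generated by the entourages of countably infinite subsets. -/
def Psi (X : Type*) : Filter (X × X) :=
  Filter.generate {S | ∃ F : Set X, F.Countable ∧ F.Infinite ∧ S = entourage F}

lemma entourage_antitone {X : Type*} {F G : Set X} (h : F ⊆ G) :
    entourage G ⊆ entourage F := by
  rintro ⟨x, y⟩ (hx | hx)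
  · exact Or.inl hx
  · exact Or.inr ⟨fun hF => hx.1 (h hF), trivial⟩

lemma entourage_mem_Psi {X : Type*} {F : Set X} (hc : F.Countable) (hi : F.Infinite) :
    entourage F ∈ Psi X :=
  Filter.mem_generate_of_mem ⟨F, hc, hi, rfl⟩

lemma mem_Psi_iff {X : Type*} [Infinite X] {U : Set (X × X)} :
    U ∈ Psi X ↔ ∃ F : Set X, F.Countable ∧ F.Infinite ∧ entourage F ⊆ U := by
  constructor
  · rw [Psi, Filter.mem_generate_iff]
    rintro ⟨t, hts, htf, hsub⟩
    have hts' : ∀ S ∈ t, ∃ F : Set X, F.Countable ∧ F.Infinite ∧ S = entourage F :=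
      fun S hS => hts hS
    choose! Fm hc hi hE using hts'
    set F0 : Set X := Set.range (Infinite.natEmbedding X) with hF0
    refine ⟨F0 ∪ ⋃ S ∈ t, Fm S, ?_, ?_, ?_⟩
    · exact (Set.countable_range _).union (htf.countable.biUnion fun S hS => hc S hS)
    · exact (Set.infinite_range_of_injective (Infinite.natEmbedding X).injective).mono
        Set.subset_union_left
    · refine subset_trans ?_ hsub
      intro p hp
      rw [Set.mem_sInter]
      intro S hS
      rw [hE S hS]
      exact entourage_antitone
        (subset_trans (Set.subset_biUnion_of_mem hS) Set.subset_union_right) hp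
  · rintro ⟨F, hc, hi, hsub⟩
    exact Filter.mem_of_superset (entourage_mem_Psi hc hi) hsub

/-- For an uncountable set `X`, the generated filter `Psi X` is a quasi-uniformity,
its topology is discrete, and the Borel covering property (for these entourages) holds. -/
theorem stmt5 {X : Type*} [Uncountable X] :
    -- (a) quasi-uniformity: every member contains the diagonal, and composition refines
    ((∀ U ∈ Psi X, ∀ x : X, (x, x) ∈ U) ∧
      (∀ U ∈ Psi X, ∃ V ∈ Psi X, ∀ x y z : X, (x, y) ∈ V → (y, z) ∈ V → (x, z) ∈ U)) ∧
    -- (b) the generated topology is discrete: every set is open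
    (∀ G : Set X, ∀ x ∈ G, ∃ U ∈ Psi X, {y | (x, y) ∈ U} ⊆ G) ∧
    -- (c) the Borel-type covering property
    (∀ V : ℕ → Set (X × X), (∀ n, V n ∈ Psi X) →
      ∃ x : ℕ → X, ∀ y : X, ∃ n, (x n, y) ∈ V n) := by
  have hF0c : (Set.range (Infinite.natEmbedding X)).Countable := Set.countable_range _
  have hF0i : (Set.range (Infinite.natEmbedding X)).Infinite :=
    Set.infinite_range_of_injective (Infinite.natEmbedding X).injective
  refine ⟨⟨?_, ?_⟩, ?_, ?_⟩
  · intro U hU x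
    obtain ⟨F, -, -, hsub⟩ := mem_Psi_iff.mp hU
    exact hsub (Or.inl rfl)
  · intro U hU
    obtain ⟨F, hc, hi, hsub⟩ := mem_Psi_iff.mp hU
    refine ⟨entourage F, entourage_mem_Psi hc hi, ?_⟩
    rintro x y z (hxy | hxy) hyz
    · cases hxy; exact hsub hyz
    · exact hsub (Or.inr ⟨hxy.1, trivial⟩)
  · intro G x hxG
    refine ⟨entourage (Set.range (Infinite.natEmbedding X) ∪ {x}),
      entourage_mem_Psi (hF0c.union (Set.countable_singleton x))
        (hF0i.mono Set.subset_union_left), ?_⟩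
    rintro y (hy | hy)
    · cases hy; exact hxG
    · exact absurd (Or.inr rfl) hy.1
  · intro V hV
    choose F hc hi hsub using fun n => mem_Psi_iff.mp (hV n)
    have hcU : (⋃ n, F n).Countable := Set.countable_iUnion hc
    obtain ⟨p, hp⟩ : ∃ p : X, p ∉ ⋃ n, F n := by
      by_contra h
      push_neg at h
      exact (Set.not_countable_univ) (hcU.mono (fun x _ => h x))
    refine ⟨fun _ => p, fun y => ⟨0, hsub 0 (Or.inr ⟨fun hpF => hp ?_, trivial⟩)⟩⟩
    exact Set.mem_iUnion.mpr ⟨0, hpF⟩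
end

section
/- If a compact Hausdorff topological space X has no isolated points and is nonempty, then player ONE has a winning strategy in the Rothberger game G₁(O,O) on X. -/
private def chainSt {X : Type*} (next : Set X → Set X → Set X) : Set X → List (Set X) → Set X
  | V, [] => V
  | V, T :: rest => chainSt next (next V T) rest

private theorem chainSt_append {X : Type*} (next : Set X → Set X → Set X)
    (l : List (Set X)) : ∀ V T, chainSt next V (l ++ [T]) = next (chainSt next V l) T := by
  induction l with
  | nil => intro V T; rfl
  | cons a l ih => intro V T; simpa [chainSt] using ih (next V a) T

private theorem key {X : Type*} [TopologicalSpace X] [CompactSpace X] [T2Space X]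
    (hni : ∀ x : X, ¬ IsOpen ({x} : Set X)) (V : Set X) :
    ∃ p : Set X × Set X, (V.Nonempty ∧ IsOpen V) →
      (p.1.Nonempty ∧ IsOpen p.1 ∧ p.2.Nonempty ∧ IsOpen p.2 ∧
        closure p.1 ⊆ V ∧ closure p.2 ⊆ V ∧ Disjoint (closure p.1) (closure p.2)) := by
  by_cases h : V.Nonempty ∧ IsOpen V
  · obtain ⟨⟨x, hx⟩, hV⟩ := h
    have hy : ∃ y ∈ V, y ≠ x := by
      by_contra hc
      push_neg at hc
      have : V = {x} := Set.eq_singleton_iff_unique_mem.2 ⟨hx, fun y hy => hc y hy⟩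
      exact hni x (this ▸ hV)
    obtain ⟨y, hyV, hyx⟩ := hy
    obtain ⟨A, B, hA, hB, hxA, hyB, hAB⟩ := t2_separation hyx.symm
    have hx' : V ∩ A ∈ nhds x := (hV.inter hA).mem_nhds ⟨hx, hxA⟩
    have hy' : V ∩ B ∈ nhds y := (hV.inter hB).mem_nhds ⟨hyV, hyB⟩
    obtain ⟨C, hCx, hCc, hCs⟩ := exists_mem_nhds_isClosed_subset hx'
    obtain ⟨D, hDy, hDc, hDs⟩ := exists_mem_nhds_isClosed_subset hy'
    refine ⟨(interior C, interior D), fun _ => ?_⟩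
    have hCint : closure (interior C) ⊆ C := by
      simpa [hCc.closure_eq] using closure_mono (interior_subset (s := C))
    have hDint : closure (interior D) ⊆ D := by
      simpa [hDc.closure_eq] using closure_mono (interior_subset (s := D))
    refine ⟨⟨x, mem_interior_iff_mem_nhds.2 hCx⟩, isOpen_interior,
      ⟨y, mem_interior_iff_mem_nhds.2 hDy⟩, isOpen_interior,
      hCint.trans (hCs.trans Set.inter_subset_left),
      hDint.trans (hDs.trans Set.inter_subset_left), ?_⟩
    exact Set.disjoint_of_subset (hCint.trans (hCs.trans Set.inter_subset_right))
      (hDint.trans (hDs.trans Set.inter_subset_right)) hAB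
  · exact ⟨(∅, ∅), fun h' => absurd h' h⟩

/-- If a nonempty compact Hausdorff space has no isolated points, then player ONE has a
winning strategy in the Rothberger game `G₁(O,O)`: a function producing open covers from
TWO's previous moves, such that TWO's selections never cover the space. -/
theorem stmt9 {X : Type*} [TopologicalSpace X] [CompactSpace X] [T2Space X] [Nonempty X]
    (hni : ∀ x : X, ¬ IsOpen ({x} : Set X)) :
    ∃ σ : List (Set X) → Set (Set X),
      (∀ l : List (Set X), (∀ W ∈ σ l, IsOpen W) ∧ ⋃₀ σ l = Set.univ) ∧
      ∀ t : ℕ → Set X,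
        (∀ n, t n ∈ σ (List.ofFn fun i : Fin n => t i.1)) →
        (⋃ n, t n) ≠ Set.univ := by
  classical
  choose f hf using key hni
  let next : Set X → Set X → Set X :=
    fun V T => if Disjoint T (closure (f V).1) then (f V).1 else (f V).2
  have hn1 : ∀ V T, Disjoint T (closure (f V).1) → next V T = (f V).1 :=
    fun V T h => if_pos h
  have hn2 : ∀ V T, ¬ Disjoint T (closure (f V).1) → next V T = (f V).2 :=
    fun V T h => if_neg h
  let st : List (Set X) → Set X := fun l => chainSt next Set.univ l
  -- next preserves the invariant and lands inside V
  have hnextInv : ∀ V T, V.Nonempty ∧ IsOpen V →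
      ((next V T).Nonempty ∧ IsOpen (next V T)) ∧ closure (next V T) ⊆ V := by
    intro V T hV
    have h := hf V hV
    by_cases hd : Disjoint T (closure (f V).1)
    · rw [hn1 V T hd]; exact ⟨⟨h.1, h.2.1⟩, h.2.2.2.2.1⟩
    · rw [hn2 V T hd]; exact ⟨⟨h.2.2.1, h.2.2.2.1⟩, h.2.2.2.2.2.1⟩
  have hinv : ∀ l : List (Set X), (st l).Nonempty ∧ IsOpen (st l) := by
    have main : ∀ (l : List (Set X)) (V : Set X), V.Nonempty ∧ IsOpen V →
        (chainSt next V l).Nonempty ∧ IsOpen (chainSt next V l) := by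
      intro l
      induction l with
      | nil => intro V hV; exact hV
      | cons a l ih => intro V hV; exact ih _ ((hnextInv V a hV).1)
    intro l; exact main l Set.univ ⟨Set.univ_nonempty, isOpen_univ⟩
  refine ⟨fun l => {(closure (f (st l)).1)ᶜ, (closure (f (st l)).2)ᶜ}, ?_, ?_⟩
  · intro l
    have h := hf (st l) (hinv l)
    constructor
    · rintro W (rfl | rfl) <;> exact isClosed_closure.isOpen_compl
    · apply Set.eq_univ_of_forall
      intro x
      by_cases hx : x ∈ closure (f (st l)).1
      · exact ⟨(closure (f (st l)).2)ᶜ, by simp, fun hx2 =>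
          h.2.2.2.2.2.2.le_bot ⟨hx, hx2⟩⟩
      · exact ⟨(closure (f (st l)).1)ᶜ, by simp, hx⟩
  · intro t ht hcov
    let s : ℕ → Set X := fun n => st (List.ofFn fun i : Fin n => t i.1)
    have hstep : ∀ n, s (n + 1) = next (s n) (t n) := by
      intro n
      have hl : (List.ofFn fun i : Fin (n+1) => t i.1)
          = (List.ofFn fun i : Fin n => t i.1) ++ [t n] := by
        rw [List.ofFn_succ']
        simp [List.concat_eq_append]
      show st (List.ofFn fun i : Fin (n+1) => t i.1) = next (s n) (t n)
      rw [hl]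
      exact chainSt_append next _ _ _
    have hsinv : ∀ n, (s n).Nonempty ∧ IsOpen (s n) := fun n => hinv _
    have hdisj : ∀ n, Disjoint (t n) (closure (s (n + 1))) := by
      intro n
      have h2 := ht n
      rw [hstep n]
      rw [Set.mem_insert_iff, Set.mem_singleton_iff] at h2
      rcases h2 with h2 | h2
      · have hd : Disjoint (t n) (closure (f (s n)).1) := by
          rw [h2]; exact disjoint_compl_left
        rw [hn1 _ _ hd]; exact hd
      · by_cases hd : Disjoint (t n) (closure (f (s n)).1)
        · rw [hn1 _ _ hd]; exact hd
        · rw [hn2 _ _ hd, h2]; exact disjoint_compl_left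
    have hsub : ∀ n, closure (s (n + 1)) ⊆ s n := by
      intro n
      rw [hstep n]
      exact (hnextInv (s n) (t n) (hsinv n)).2
    let K : ℕ → Set X := fun n => closure (s (n + 1))
    have hKne : ∀ n, (K n).Nonempty := fun n => (hsinv (n+1)).1.closure
    have hKsub : ∀ n, K (n + 1) ⊆ K n := by
      intro n
      show closure (s (n + 2)) ⊆ closure (s (n + 1))
      calc closure (s (n + 2)) ⊆ s (n + 1) := hsub (n + 1)
        _ ⊆ closure (s (n + 1)) := subset_closure
    have hKc : ∀ n, IsClosed (K n) := fun n => isClosed_closure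
    obtain ⟨x, hx⟩ := IsCompact.nonempty_iInter_of_sequence_nonempty_isCompact_isClosed
      K hKsub hKne ((hKc 0).isCompact) hKc
    have hxnot : ∀ n, x ∉ t n := fun n hxt =>
      (hdisj n).le_bot ⟨hxt, Set.mem_iInter.1 hx n⟩
    have : x ∈ ⋃ n, t n := hcov ▸ Set.mem_univ x
    obtain ⟨_, ⟨n, rfl⟩, hxn⟩ := this
    exact hxnot n hxn
end

section
/- Let X be a compact Hausdorff space satisfying S₁(O,O) (equivalently, compact scattered). Then player TWO has a winning strategy in the game G₁(O,O) on X. -/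
/-!
If a compact Hausdorff space `X` is not scattered, it contains a nonempty perfect set and hence a
Cantor scheme `K : List Bool → Set X` of nonempty closed sets, nested along branches and with
disjoint siblings. For each level `n` and each choice of one child of every node of length `n`,
the complement of the chosen children is open, and by disjointness of siblings these complements
cover `X`. A selection from these covers chooses one child per node at every level; following the
chosen children down a branch gives, by compactness, a point that no selected set covers. Hence
`S₁(O,O)` forces `X` to be scattered.

In a compact scattered space, every nonempty closed set `R` has a nonempty finite top
Cantor–Bendixson level. TWO answers each cover with a member containing a point of the top level
of the part of `X` not yet covered. This lowers the Cantor–Bendixson rank of the uncovered part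
or keeps it and shrinks its top level, so the uncovered part is empty after finitely many moves.
-/

open Set

universe u

variable {X : Type u} [TopologicalSpace X]

def IsOpenCover (U : Set (Set X)) : Prop :=
  (∀ W ∈ U, IsOpen W) ∧ ⋃₀ U = univ

def Rothberger (X : Type u) [TopologicalSpace X] : Prop :=
  ∀ U : ℕ → Set (Set X), (∀ n, IsOpenCover (U n)) →
    ∃ T : ℕ → Set X, (∀ n, T n ∈ U n) ∧ ⋃ n, T n = univ

def IsScattered (X : Type u) [TopologicalSpace X] : Prop :=
  ∀ C : Set X, Preperfect C → C = ∅

theorem Rothberger.nonempty (h : Rothberger X) : Nonempty X := by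
  by_contra hX
  have hempty : (univ : Set X) = ∅ := univ_eq_empty_iff.2 (not_nonempty_iff.1 hX)
  obtain ⟨T, hT, -⟩ := h (fun _ => ∅) fun _ => ⟨by simp, by rw [sUnion_empty, hempty]⟩
  exact hT 0

section CantorScheme

variable (K : List Bool → Set X)

def schemeAvoid (n : ℕ) (f : List Bool → Bool) : Set X :=
  (⋃ s ∈ {s : List Bool | s.length = n}, K (f s :: s))ᶜ

theorem isOpenCover_range_schemeAvoid (hclosed : ∀ s, IsClosed (K s))
    (hdisj : ∀ s, Disjoint (K (false :: s)) (K (true :: s))) (n : ℕ) :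
    IsOpenCover (range (schemeAvoid K n)) := by
  classical
  refine ⟨?_, eq_univ_of_forall fun x => ?_⟩
  · rintro _ ⟨f, rfl⟩
    exact ((List.finite_length_eq Bool n).isClosed_biUnion fun s _ => hclosed _).isOpen_compl
  · refine ⟨_, ⟨fun s => decide (x ∈ K (false :: s)), rfl⟩, ?_⟩
    simp only [schemeAvoid, mem_compl_iff, mem_iUnion, not_exists]
    intro s _ hx
    by_cases h0 : x ∈ K (false :: s)
    · simp only [h0, decide_true] at hx
      exact disjoint_left.1 (hdisj s) h0 hx
    · simp [h0] at hx

def schemeBranch (f : ℕ → List Bool → Bool) : ℕ → List Bool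
  | 0 => []
  | n + 1 => f n (schemeBranch f n) :: schemeBranch f n

theorem length_schemeBranch (f : ℕ → List Bool → Bool) (n : ℕ) :
    (schemeBranch f n).length = n := by
  induction n with
  | zero => rfl
  | succ n ih => simp [schemeBranch, ih]

theorem exists_forall_notMem_schemeAvoid [CompactSpace X] (hclosed : ∀ s, IsClosed (K s))
    (hne : ∀ s, (K s).Nonempty) (hsub : ∀ b s, K (b :: s) ⊆ K s)
    (f : ℕ → List Bool → Bool) : ∃ x, ∀ n, x ∉ schemeAvoid K n (f n) := by
  obtain ⟨x, hx⟩ := IsCompact.nonempty_iInter_of_sequence_nonempty_isCompact_isClosed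
    (fun n => K (schemeBranch f n)) (fun n => hsub _ _) (fun n => hne _)
    (hclosed _).isCompact (fun n => hclosed _)
  refine ⟨x, fun n hxn => hxn ?_⟩
  exact mem_biUnion (length_schemeBranch f n) (mem_iInter.1 hx (n + 1))

theorem not_rothberger_of_cantorScheme [CompactSpace X] (hclosed : ∀ s, IsClosed (K s))
    (hne : ∀ s, (K s).Nonempty) (hsub : ∀ b s, K (b :: s) ⊆ K s)
    (hdisj : ∀ s, Disjoint (K (false :: s)) (K (true :: s))) : ¬ Rothberger X := by
  intro h
  obtain ⟨T, hT, hcov⟩ := h _ (isOpenCover_range_schemeAvoid K hclosed hdisj)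
  choose f hf using hT
  obtain ⟨x, hx⟩ := exists_forall_notMem_schemeAvoid K hclosed hne hsub f
  obtain ⟨n, hxn⟩ := mem_iUnion.1 (hcov ▸ mem_univ x)
  exact hx n (hf n ▸ hxn)

end CantorScheme

theorem Perfect.exists_cantorScheme [T25Space X] {C : Set X} (hC : Perfect C) (hne : C.Nonempty) :
    ∃ K : List Bool → Set X, (∀ s, Perfect (K s) ∧ (K s).Nonempty) ∧
      (∀ b s, K (b :: s) ⊆ K s) ∧ ∀ s, Disjoint (K (false :: s)) (K (true :: s)) := by
  choose C₀ C₁ h₀ h₁ hdisj using fun P : {C : Set X // Perfect C ∧ C.Nonempty} =>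
    P.2.1.splitting P.2.2
  let half (b : Bool) (P : {C : Set X // Perfect C ∧ C.Nonempty}) :
      {C : Set X // Perfect C ∧ C.Nonempty} :=
    cond b ⟨C₁ P, (h₁ P).1, (h₁ P).2.1⟩ ⟨C₀ P, (h₀ P).1, (h₀ P).2.1⟩
  refine ⟨fun s => (s.foldr half ⟨C, hC, hne⟩).1, fun s => (s.foldr half ⟨C, hC, hne⟩).2,
    fun b s => ?_, fun s => hdisj _⟩
  cases b
  · exact (h₀ _).2.2
  · exact (h₁ _).2.2

theorem Rothberger.isScattered [CompactSpace X] [T2Space X] (h : Rothberger X) :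
    IsScattered X := by
  intro C hC
  by_contra hne
  obtain ⟨K, hK, hsub, hdisj⟩ :=
    hC.perfect_closure.exists_cantorScheme (nonempty_iff_ne_empty.2 hne).closure
  exact not_rothberger_of_cantorScheme K (fun s => (hK s).1.closed) (fun s => (hK s).2) hsub
    hdisj h

/-- The Cantor–Bendixson derivative `R^(α)`, with the successor and limit steps merged into
`R^(α) = R ∩ ⋂_{β < α} (R^(β))'`. -/
noncomputable def cbLevel (R : Set X) : Ordinal.{u} → Set X
  | α => R ∩ ⋂ β : Iio α, derivedSet (cbLevel R β)
termination_by α => α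
decreasing_by exact β.2

theorem cbLevel_eq (R : Set X) (α : Ordinal.{u}) :
    cbLevel R α = R ∩ ⋂ β : Iio α, derivedSet (cbLevel R β) := by
  rw [cbLevel]

theorem cbLevel_subset (R : Set X) (α : Ordinal.{u}) : cbLevel R α ⊆ R := by
  rw [cbLevel_eq]; exact inter_subset_left

theorem cbLevel_subset_derivedSet (R : Set X) {α β : Ordinal.{u}} (h : α < β) :
    cbLevel R β ⊆ derivedSet (cbLevel R α) := by
  rw [cbLevel_eq R β]
  exact inter_subset_right.trans (iInter_subset (fun γ : Iio β => _) ⟨α, h⟩)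

theorem cbLevel_mono {R R' : Set X} (h : R' ⊆ R) : ∀ α : Ordinal.{u}, cbLevel R' α ⊆ cbLevel R α
  | α => by
    rw [cbLevel_eq, cbLevel_eq]
    exact inter_subset_inter h (iInter_mono fun β => derivedSet_mono _ _ (cbLevel_mono h β.1))
termination_by α => α
decreasing_by exact β.2

theorem IsScattered.exists_cbLevel_eq_empty (hX : IsScattered X) (R : Set X) :
    ∃ α : Ordinal.{u}, cbLevel R α = ∅ := by
  by_contra! hne
  have hstrict {α β : Ordinal.{u}} (h : α < β) : cbLevel R α ≠ cbLevel R β := fun he =>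
    (hne α).ne_empty <| hX _ <|
      preperfect_iff_subset_derivedSet.2 (he.le.trans (cbLevel_subset_derivedSet R h))
  refine not_injective_of_ordinal (cbLevel R) fun α β he => ?_
  rcases lt_trichotomy α β with h | h | h
  · exact absurd he (hstrict h)
  · exact h
  · exact absurd he.symm (hstrict h)

noncomputable def cbRank (R : Set X) : Ordinal.{u} := sInf {α | cbLevel R α = ∅}

noncomputable def cbTop (R : Set X) : Set X := R ∩ ⋂ β : Iio (cbRank R), cbLevel R β

theorem cbLevel_cbRank (hX : IsScattered X) (R : Set X) : cbLevel R (cbRank R) = ∅ :=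
  csInf_mem (hX.exists_cbLevel_eq_empty R)

theorem cbRank_mono (hX : IsScattered X) {R R' : Set X} (h : R' ⊆ R) : cbRank R' ≤ cbRank R :=
  csInf_le' (subset_empty_iff.1 ((cbLevel_mono h _).trans (cbLevel_cbRank hX R).subset))

theorem cbTop_subset (R : Set X) : cbTop R ⊆ R := inter_subset_left

theorem cbTop_mono {R R' : Set X} (h : R' ⊆ R) (hrank : cbRank R' = cbRank R) :
    cbTop R' ⊆ cbTop R := by
  rintro x ⟨hxR', hx⟩
  refine ⟨h hxR', mem_iInter.2 fun β => cbLevel_mono h β.1 (mem_iInter.1 hx ⟨β.1, ?_⟩)⟩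
  rw [hrank]
  exact β.2

theorem IsClosed.cbLevel [T1Space X] {R : Set X} (hR : IsClosed R) (α : Ordinal.{u}) :
    IsClosed (cbLevel R α) := by
  rw [cbLevel_eq]
  exact hR.inter (isClosed_iInter fun _ => isClosed_derivedSet _)

theorem cbLevel_anti [T1Space X] {R : Set X} (hR : IsClosed R) : Antitone (cbLevel R) := by
  intro α β h
  rcases h.lt_or_eq with h | rfl
  · exact (cbLevel_subset_derivedSet R h).trans
      ((isClosed_iff_derivedSet_subset _).1 (hR.cbLevel α))
  · exact subset_rfl

theorem cbTop_nonempty [T1Space X] [CompactSpace X] {R : Set X} (hR : IsClosed R)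
    (hne : R.Nonempty) : (cbTop R).Nonempty := by
  rcases isEmpty_or_nonempty (Iio (cbRank R)) with hι | hι
  · simpa [cbTop] using hne
  have hlev (β : Iio (cbRank R)) : (cbLevel R β).Nonempty :=
    nonempty_iff_ne_empty.2 fun he =>
      (csInf_le' (s := {α : Ordinal.{u} | cbLevel R α = ∅}) he).not_gt β.2
  obtain ⟨x, hx⟩ := IsCompact.nonempty_iInter_of_directed_nonempty_isCompact_isClosed
    (fun β : Iio (cbRank R) => cbLevel R β)
    ((cbLevel_anti hR).comp_monotone (Subtype.mono_coe _)).directed_ge hlev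
    (fun β => (hR.cbLevel β).isCompact) (fun β => hR.cbLevel β)
  exact ⟨x, cbLevel_subset R _ (mem_iInter.1 hx (Classical.arbitrary _)), hx⟩

theorem cbTop_finite [CompactSpace X] (hX : IsScattered X) {R : Set X} (hR : IsClosed R) :
    (cbTop R).Finite := by
  have hder : derivedSet (cbTop R) ⊆ cbLevel R (cbRank R) := by
    rw [cbLevel_eq]
    exact subset_inter ((derivedSet_subset_closure _).trans (closure_minimal (cbTop_subset R) hR))
      (subset_iInter fun β => derivedSet_mono _ _ (inter_subset_right.trans (iInter_subset _ β)))
  by_contra hinf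
  obtain ⟨x, hx⟩ := Set.Infinite.exists_accPt_principal hinf
  exact (cbLevel_cbRank hX R ▸ hder) hx

noncomputable def cbMeasure (R : Set X) : Ordinal.{u} ×ₗ ℕ := toLex (cbRank R, (cbTop R).ncard)

theorem cbMeasure_lt [CompactSpace X] (hX : IsScattered X) {R R' : Set X} (hR : IsClosed R)
    (h : R' ⊆ R) {x : X} (hx : x ∈ cbTop R) (hx' : x ∉ R') : cbMeasure R' < cbMeasure R := by
  rw [cbMeasure, cbMeasure, Prod.Lex.toLex_lt_toLex]
  rcases (cbRank_mono hX h).lt_or_eq with hlt | heq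
  · exact Or.inl hlt
  · refine Or.inr ⟨heq, ncard_lt_ncard ⟨cbTop_mono h heq, fun hsub => ?_⟩ (cbTop_finite hX hR)⟩
    exact hx' (cbTop_subset R' (hsub hx))

section Uncovered

variable {α : Type*} (move : Set α → Set (Set α) → Set α)

def uncovered (O : ℕ → Set (Set α)) : ℕ → Set α
  | 0 => univ
  | n + 1 => uncovered O n \ move (uncovered O n) (O n)

theorem ofFn_succ_eq_append {β : Type*} (f : ℕ → β) (n : ℕ) :
    (List.ofFn fun i : Fin (n + 1) => f i.1) = (List.ofFn fun i : Fin n => f i.1) ++ [f n] := by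
  rw [List.ofFn_succ', List.concat_eq_append]
  rfl

theorem foldl_ofFn_eq_uncovered (O : ℕ → Set (Set α)) (n : ℕ) :
    (List.ofFn fun i : Fin n => O i.1).foldl (fun R U => R \ move R U) univ =
      uncovered move O n := by
  induction n with
  | zero => rfl
  | succ n ih => rw [ofFn_succ_eq_append, List.foldl_concat, ih, uncovered]

theorem compl_uncovered_subset (O : ℕ → Set (Set α)) (n : ℕ) :
    (uncovered move O n)ᶜ ⊆ ⋃ k, move (uncovered move O k) (O k) := by
  induction n with
  | zero => simp [uncovered]
  | succ n ih =>
    intro x hx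
    by_cases hxn : x ∈ uncovered move O n
    · exact mem_iUnion.2 ⟨n, not_not.1 fun h => hx ⟨hxn, h⟩⟩
    · exact ih hxn

end Uncovered

def TwoHasWinningStrategy (X : Type u) [TopologicalSpace X] : Prop :=
  ∃ τ : List (Set (Set X)) → Set X, ∀ O : ℕ → Set (Set X), (∀ n, IsOpenCover (O n)) →
    (∀ n, τ (List.ofFn fun i : Fin (n + 1) => O i.1) ∈ O n) ∧
    (⋃ n, τ (List.ofFn fun i : Fin (n + 1) => O i.1)) = univ

theorem twoHasWinningStrategy_of_move (move : Set X → Set (Set X) → Set X)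
    (hmem : ∀ R U, IsOpenCover U → move R U ∈ U)
    (hwin : ∀ O : ℕ → Set (Set X), (∀ n, IsOpenCover (O n)) → ∃ n, uncovered move O n = ∅) :
    TwoHasWinningStrategy X := by
  refine ⟨fun L => move (L.dropLast.foldl (fun R U => R \ move R U) univ) (L.getLastD ∅),
    fun O hO => ?_⟩
  have hτ (n : ℕ) : move ((List.ofFn fun i : Fin (n + 1) => O i.1).dropLast.foldl
      (fun R U => R \ move R U) univ) ((List.ofFn fun i : Fin (n + 1) => O i.1).getLastD ∅) =
      move (uncovered move O n) (O n) := by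
    rw [ofFn_succ_eq_append, List.dropLast_concat, List.getLastD_concat,
      foldl_ofFn_eq_uncovered]
  simp only [hτ]
  obtain ⟨n, hn⟩ := hwin O hO
  refine ⟨fun n => hmem _ _ (hO n), univ_subset_iff.1 ?_⟩
  simpa [hn] using compl_uncovered_subset move O n

noncomputable def cbMove [Nonempty X] (R : Set X) (U : Set (Set X)) : Set X :=
  Classical.epsilon fun T => T ∈ U ∧ Classical.epsilon (· ∈ cbTop R) ∈ T

theorem cbMove_spec [Nonempty X] (R : Set X) {U : Set (Set X)} (hU : ⋃₀ U = univ) :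
    cbMove R U ∈ U ∧ Classical.epsilon (· ∈ cbTop R) ∈ cbMove R U :=
  Classical.epsilon_spec (hU ▸ mem_univ _ : _ ∈ ⋃₀ U)

theorem IsScattered.exists_uncovered_cbMove_eq_empty [T1Space X] [CompactSpace X] [Nonempty X]
    (hX : IsScattered X) (O : ℕ → Set (Set X)) (hO : ∀ n, IsOpenCover (O n)) :
    ∃ n, uncovered cbMove O n = ∅ := by
  by_contra! hne
  have hclosed (n : ℕ) : IsClosed (uncovered cbMove O n) := by
    induction n with
    | zero => exact isClosed_univ
    | succ n ih => exact ih.sdiff ((hO n).1 _ (cbMove_spec _ (hO n).2).1)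
  refine not_strictAnti_of_wellFoundedLT (cbMeasure ∘ uncovered cbMove O)
    (strictAnti_nat_of_succ_lt fun n => ?_)
  exact cbMeasure_lt hX (hclosed n) sdiff_subset
    (Classical.epsilon_spec (cbTop_nonempty (hclosed n) (hne n)))
    fun h => h.2 (cbMove_spec _ (hO n).2).2

theorem IsScattered.twoHasWinningStrategy [T1Space X] [CompactSpace X] [Nonempty X]
    (hX : IsScattered X) : TwoHasWinningStrategy X :=
  twoHasWinningStrategy_of_move cbMove (fun R _ hU => (cbMove_spec R hU.2).1)
    hX.exists_uncovered_cbMove_eq_empty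

/-- If a compact Hausdorff space satisfies `S₁(O,O)`, then player TWO has a winning
strategy in the game `G₁(O,O)`: a function choosing, from each finite history of open
covers played by ONE, one member of the last cover, so that the choices always cover. -/
theorem stmt12 {X : Type*} [TopologicalSpace X] [CompactSpace X] [T2Space X]
    (hS1 : ∀ U : ℕ → Set (Set X),
      (∀ n, (∀ W ∈ U n, IsOpen W) ∧ ⋃₀ U n = Set.univ) →
      ∃ T : ℕ → Set X, (∀ n, T n ∈ U n) ∧ (⋃ n, T n) = Set.univ) :
    ∃ τ : List (Set (Set X)) → Set X,
      ∀ O : ℕ → Set (Set X),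
        (∀ n, (∀ W ∈ O n, IsOpen W) ∧ ⋃₀ O n = Set.univ) →
        (∀ n, τ (List.ofFn fun i : Fin (n + 1) => O i.1) ∈ O n) ∧
        (⋃ n, τ (List.ofFn fun i : Fin (n + 1) => O i.1)) = Set.univ := by
  have : Nonempty X := Rothberger.nonempty hS1
  exact (Rothberger.isScattered hS1).twoHasWinningStrategy
end

section
/- Let X be a topological space in which every ω-cover contains a countable ω-subcover. If the partition relation Ω → (Ω, O)² holds for X (for every ω-cover U and every 2-coloring of pairs from U, either there is a subfamily which is an ω-cover on whose pairs the color is the first color, or there is a subfamily which is an open cover of X on whose pairs the color is the second color), then X satisfies S₁(Ω,Ω). -/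
/-- If every ω-cover has a countable ω-subcover and the partition relation
`Ω → (Ω, O)²` holds, then `S₁(Ω,Ω)` holds. -/
theorem stmt14 {X : Type*} [TopologicalSpace X]
    (hctble : ∀ U : Set (Set X), IsOmegaCover U →
      ∃ V ⊆ U, V.Countable ∧ IsOmegaCover V)
    (hpart : ∀ U : Set (Set X), IsOmegaCover U →
      ∀ f : Set X → Set X → Fin 2, (∀ a b, f a b = f b a) →
        (∃ V ⊆ U, IsOmegaCover V ∧
          ∀ a ∈ V, ∀ b ∈ V, a ≠ b → f a b = 0) ∨
        (∃ V ⊆ U, Set.univ ⊆ ⋃₀ V ∧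
          ∀ a ∈ V, ∀ b ∈ V, a ≠ b → f a b = 1)) :
    ∀ U : ℕ → Set (Set X), (∀ n, IsOmegaCover (U n)) →
      ∃ T : ℕ → Set X, (∀ n, T n ∈ U n) ∧ IsOmegaCover {W | ∃ n, T n = W} := by
  intro U hU
  classical
  -- default choices from each cover
  choose d hd _ using fun n => (hU n).2.2 ∅ Set.finite_empty
  -- countable ω-subcovers
  choose Vn hVsub hVc hVo using fun n => hctble (U n) (hU n)
  have hne : ∀ n, (Vn n).Nonempty := by
    intro n
    obtain ⟨W, hW, -⟩ := (hVo n).2.2 ∅ Set.finite_empty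
    exact ⟨W, hW⟩
  choose e he using fun n => (hVc n).exists_eq_range (hne n)
  have hemem : ∀ n k, e n k ∈ U n := by
    intro n k
    exact hVsub n (by rw [he n]; exact ⟨k, rfl⟩)
  have hnuniv : ∀ n k, e n k ≠ Set.univ := by
    intro n k h
    exact (hU n).1 (h ▸ hemem n k)
  rcases isEmpty_or_nonempty X with hX | hX
  · refine ⟨d, hd, ?_, ?_, ?_⟩
    · rintro ⟨n, hn⟩
      exact (hU n).1 (hn ▸ hd n)
    · rintro W ⟨n, rfl⟩
      exact (hU n).2.1 _ (hd n)
    · intro F _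
      exact ⟨d 0, ⟨0, rfl⟩, fun x _ => (IsEmpty.false x).elim⟩
  -- the combined ω-cover
  set V : Set (Set X) := {A | ∃ m k : ℕ, A = e 0 m ∩ e m k} with hVdef
  have hVomega : IsOmegaCover V := by
    refine ⟨?_, ?_, ?_⟩
    · rintro ⟨m, k, hmk⟩
      exact hnuniv 0 m (Set.eq_univ_of_univ_subset (hmk ▸ Set.inter_subset_left))
    · rintro W ⟨m, k, rfl⟩
      exact ((hU 0).2.1 _ (hemem 0 m)).inter ((hU m).2.1 _ (hemem m k))
    · intro F hF
      obtain ⟨W, hW, hFW⟩ := (hVo 0).2.2 F hF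
      rw [he 0] at hW
      obtain ⟨m, rfl⟩ := hW
      obtain ⟨W', hW', hFW'⟩ := (hVo m).2.2 F hF
      rw [he m] at hW'
      obtain ⟨k, rfl⟩ := hW'
      exact ⟨e 0 m ∩ e m k, ⟨m, k, rfl⟩, Set.subset_inter hFW hFW'⟩
  -- representation function
  have hrep : ∀ A ∈ V, ∃ q : ℕ × ℕ, A = e 0 q.1 ∩ e q.1 q.2 := by
    rintro A ⟨m, k, rfl⟩; exact ⟨(m, k), rfl⟩
  let p : Set X → ℕ × ℕ := fun A =>
    if h : ∃ q : ℕ × ℕ, A = e 0 q.1 ∩ e q.1 q.2 then h.choose else (0, 0)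
  have hp : ∀ A ∈ V, A = e 0 (p A).1 ∩ e (p A).1 (p A).2 := by
    intro A hA
    obtain h := hrep A hA
    simp only [p, dif_pos h]
    exact h.choose_spec
  -- the coloring
  let f : Set X → Set X → Fin 2 := fun A B => if (p A).1 = (p B).1 then 1 else 0
  have hfsymm : ∀ a b, f a b = f b a := by
    intro a b
    by_cases h : (p a).1 = (p b).1
    · simp only [f, if_pos h, if_pos h.symm]
    · simp only [f, if_neg h, if_neg (Ne.symm h)]
  rcases hpart V hVomega f hfsymm with ⟨V', hsub, hV'o, hhom⟩ | ⟨V', hsub, hcov, hhom⟩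
  · -- 0-homogeneous: first indices pairwise distinct, gives the selection
    have hinj : ∀ A ∈ V', ∀ B ∈ V', (p A).1 = (p B).1 → A = B := by
      intro A hA B hB hAB
      by_contra hne'
      have := hhom A hA B hB hne'
      simp only [f, if_pos hAB] at this
      exact absurd this (by decide)
    set T : ℕ → Set X := fun n =>
      if h : ∃ A, A ∈ V' ∧ (p A).1 = n then e n (p h.choose).2 else d n with hTdef
    have hTmem : ∀ n, T n ∈ U n := by
      intro n
      simp only [hTdef]
      split
      · exact hemem _ _
      · exact hd n
    refine ⟨T, hTmem, ?_, ?_, ?_⟩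
    · rintro ⟨n, hn⟩
      exact (hU n).1 (hn ▸ hTmem n)
    · rintro W ⟨n, rfl⟩
      exact (hU n).2.1 _ (hTmem n)
    · intro F hF
      obtain ⟨A, hA, hFA⟩ := hV'o.2.2 F hF
      have hAV : A ∈ V := hsub hA
      refine ⟨T (p A).1, ⟨(p A).1, rfl⟩, ?_⟩
      have hex : ∃ B, B ∈ V' ∧ (p B).1 = (p A).1 := ⟨A, hA, rfl⟩
      have hBA : hex.choose = A :=
        hinj _ hex.choose_spec.1 A hA hex.choose_spec.2
      simp only [hTdef, dif_pos hex, hBA]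
      calc F ⊆ A := hFA
        _ = e 0 (p A).1 ∩ e (p A).1 (p A).2 := hp A hAV
        _ ⊆ e (p A).1 (p A).2 := Set.inter_subset_right
  · -- 1-homogeneous: all elements share the first index; impossible
    exfalso
    obtain ⟨x⟩ := hX
    obtain ⟨A, hA, hxA⟩ := hcov (Set.mem_univ x)
    have huniv : Set.univ ⊆ e 0 (p A).1 := by
      intro y _
      obtain ⟨B, hB, hyB⟩ := hcov (Set.mem_univ y)
      have hBe : y ∈ e 0 (p B).1 := by
        have := hp B (hsub hB)
        rw [this] at hyB
        exact hyB.1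
      rcases eq_or_ne A B with rfl | hne'
      · exact hBe
      · have := hhom A hA B hB hne'
        have hfst : (p A).1 = (p B).1 := by
          by_contra hc
          simp only [f, if_neg hc] at this
          exact absurd this (by decide)
        rw [hfst]; exact hBe
    exact hnuniv 0 (p A).1 (Set.eq_univ_of_univ_subset huniv)
end

section
/- Let X be a topological space in which every ω-cover has a countable ω-subcover, and suppose the partition relation Ω → (Ω, 4)³ holds: for every ω-cover U and every 2-coloring f of 3-element subsets of U, either there is an ω-subcover homogeneous for color 1, or there is a 4-element subset of U all of whose 3-element subsets get color 2. Then the partition relation Ω → (Ω)²₂ holds: for every ω-cover U and every 2-coloring of pairs from U there is an ω-subcover on whose pairs the coloring is constant. -/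
/-- Removing finitely many members from an ω-cover leaves an ω-cover. -/
lemma omegaCover_diff {X : Type*} [TopologicalSpace X] {V S : Set (Set X)}
    (hV : IsOmegaCover V) (hSV : S ⊆ V) (hS : S.Finite) :
    IsOmegaCover (V \ S) := by
  obtain ⟨h1, h2, h3⟩ := hV
  refine ⟨fun h => h1 h.1, fun W hW => h2 W hW.1, ?_⟩
  intro F hF
  have hX : Nonempty X := by
    obtain ⟨W0, hW0, -⟩ := h3 ∅ Set.finite_empty
    obtain ⟨x, -⟩ := (Set.ne_univ_iff_exists_notMem W0).mp (fun h => h1 (h ▸ hW0))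
    exact ⟨x⟩
  have hne : ∀ W ∈ S, ∃ x, x ∉ W := by
    intro W hW
    exact (Set.ne_univ_iff_exists_notMem W).mp (fun h => h1 (h ▸ hSV hW))
  choose! p hp using hne
  obtain ⟨W', hW', hFW'⟩ := h3 (F ∪ p '' S) (hF.union (hS.image p))
  exact ⟨W', ⟨hW', fun hWS => hp W' hWS (hFW' (Set.mem_union_right _ ⟨W', hWS, rfl⟩))⟩,
    fun x hx => hFW' (Set.mem_union_left _ hx)⟩

/-- A 3-element set has a unique enumeration sorted by rank. -/
lemma triple_sorted_unique {α : Type*} (r : α → ℕ) {a b c a' b' c' : α}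
    (h : ({a, b, c} : Set α) = {a', b', c'}) (h1 : r a < r b) (h2 : r b < r c)
    (h1' : r a' < r b') (h2' : r b' < r c') : a = a' ∧ b = b' ∧ c = c' := by
  have ha' : a' = a ∨ a' = b ∨ a' = c := by
    have : a' ∈ ({a, b, c} : Set α) := by rw [h]; simp
    simpa using this
  have hb' : b' = a ∨ b' = b ∨ b' = c := by
    have : b' ∈ ({a, b, c} : Set α) := by rw [h]; simp
    simpa using this
  have hc' : c' = a ∨ c' = b ∨ c' = c := by
    have : c' ∈ ({a, b, c} : Set α) := by rw [h]; simp
    simpa using this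
  rcases ha' with e1 | e1 | e1 <;> rcases hb' with e2 | e2 | e2 <;>
    rcases hc' with e3 | e3 | e3 <;>
    first
      | exact ⟨e1.symm, e2.symm, e3.symm⟩
      | (have f1 := congrArg r e1; have f2 := congrArg r e2; have f3 := congrArg r e3; omega)

/-- Four elements with distinct ranks can be sorted by rank. -/
lemma exists_sorted4 {α : Type*} (r : α → ℕ) (s : Finset α) (hcard : s.card = 4)
    (hinj : ∀ a ∈ s, ∀ b ∈ s, r a = r b → a = b) :
    ∃ x ∈ s, ∃ y ∈ s, ∃ z ∈ s, ∃ w ∈ s, r x < r y ∧ r y < r z ∧ r z < r w := by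
  classical
  have hinj' : Set.InjOn r ↑s := fun a ha b hb => hinj a ha b hb
  have hc : (s.image r).card = 4 := by rw [Finset.card_image_of_injOn hinj', hcard]
  set e := (s.image r).orderEmbOfFin hc with he
  obtain ⟨x, hx, hxe⟩ := Finset.mem_image.mp (Finset.orderEmbOfFin_mem _ hc (0 : Fin 4))
  obtain ⟨y, hy, hye⟩ := Finset.mem_image.mp (Finset.orderEmbOfFin_mem _ hc (1 : Fin 4))
  obtain ⟨z, hz, hze⟩ := Finset.mem_image.mp (Finset.orderEmbOfFin_mem _ hc (2 : Fin 4))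
  obtain ⟨w, hw, hwe⟩ := Finset.mem_image.mp (Finset.orderEmbOfFin_mem _ hc (3 : Fin 4))
  refine ⟨x, hx, y, hy, z, hz, w, hw, ?_, ?_, ?_⟩
  · rw [hxe, hye]
    exact ((s.image r).orderEmbOfFin hc).strictMono (show (0 : Fin 4) < 1 by decide)
  · rw [hye, hze]
    exact ((s.image r).orderEmbOfFin hc).strictMono (show (1 : Fin 4) < 2 by decide)
  · rw [hze, hwe]
    exact ((s.image r).orderEmbOfFin hc).strictMono (show (2 : Fin 4) < 3 by decide)

lemma fin_two_eq_one {v : Fin 2} (h : v ≠ 0) : v = 1 := by omega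

/-- If every ω-cover has a countable ω-subcover and the partition relation
`Ω → (Ω, 4)³` holds, then `Ω → (Ω)²₂` holds. -/
theorem stmt15 {X : Type*} [TopologicalSpace X]
    (hctble : ∀ U : Set (Set X), IsOmegaCover U →
      ∃ V ⊆ U, V.Countable ∧ IsOmegaCover V)
    (hpart : ∀ U : Set (Set X), IsOmegaCover U →
      ∀ f : Finset (Set X) → Fin 2,
        (∃ V ⊆ U, IsOmegaCover V ∧
          ∀ s : Finset (Set X), ↑s ⊆ V → s.card = 3 → f s = 0) ∨
        (∃ s : Finset (Set X), ↑s ⊆ U ∧ s.card = 4 ∧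
          ∀ t : Finset (Set X), t ⊆ s → t.card = 3 → f t = 1)) :
    ∀ U : Set (Set X), IsOmegaCover U →
      ∀ f : Finset (Set X) → Fin 2,
        ∃ V ⊆ U, IsOmegaCover V ∧ ∃ c : Fin 2,
          ∀ s : Finset (Set X), ↑s ⊆ V → s.card = 2 → f s = c := by
  classical
  intro U hU f
  obtain ⟨V₀, hV₀U, hV₀c, hV₀⟩ := hctble U hU
  obtain ⟨e, he⟩ := Set.countable_iff_exists_injective.mp hV₀c
  set r : Set X → ℕ := fun W => if h : W ∈ V₀ then e ⟨W, h⟩ else 0 with hr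
  have hrinj : ∀ a ∈ V₀, ∀ b ∈ V₀, r a = r b → a = b := by
    intro a ha b hb hab
    simp only [hr, dif_pos ha, dif_pos hb] at hab
    exact Subtype.ext_iff.mp (he hab)
  set P : Finset (Set X) → Prop := fun t => ∃ a b c, r a < r b ∧ r b < r c ∧
    (t : Set (Set X)) = {a, b, c} ∧ f {a, b} = 0 ∧ f {b, c} = 1 with hP
  set g : Finset (Set X) → Fin 2 := fun t => if P t then 1 else 0 with hg
  -- a generic 3-element Finset lemma
  have card3 : ∀ a b c : Set X, r a < r b → r b < r c →
      ({a, b, c} : Finset (Set X)).card = 3 := by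
    intro a b c hab hbc
    have h1 : a ≠ b := fun h => by simp [h] at hab
    have h2 : a ≠ c := fun h => by subst h; omega
    have h3 : b ≠ c := fun h => by simp [h] at hbc
    rw [Finset.card_insert_of_notMem (by simp [h1, h2]),
      Finset.card_insert_of_notMem (by simp [h3]), Finset.card_singleton]
  rcases hpart V₀ hV₀ g with ⟨V, hVV₀, hV, hg0⟩ | ⟨s, hsV₀, hcard, htr⟩
  · -- homogeneous side: on V, f {a,b} = 0 propagates
    have key : ∀ a ∈ V, ∀ b ∈ V, ∀ c ∈ V, r a < r b → r b < r c →
        f {a, b} = 0 → f {b, c} = 0 := by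
      intro a ha b hb c hc hab hbc hf
      by_contra hne
      have hsub : ↑({a, b, c} : Finset (Set X)) ⊆ V := by
        intro W hW
        simp only [Finset.coe_insert, Finset.coe_singleton, Set.mem_insert_iff,
          Set.mem_singleton_iff] at hW
        rcases hW with rfl | rfl | rfl <;> assumption
      have h0 := hg0 {a, b, c} hsub (card3 a b c hab hbc)
      have hPt : P {a, b, c} :=
        ⟨a, b, c, hab, hbc, by simp, hf, fin_two_eq_one hne⟩
      have h0' : (if P ({a, b, c} : Finset (Set X)) then (1 : Fin 2) else 0) = 0 := h0
      rw [if_pos hPt] at h0'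
      exact absurd h0' (by decide)
    by_cases hex : ∃ a ∈ V, ∃ b ∈ V, r a < r b ∧ f {a, b} = 0
    · obtain ⟨a, ha, b, hb, hab, hfab⟩ := hex
      set S : Set (Set X) := {W ∈ V | r W ≤ r b} with hS
      have hSfin : S.Finite := by
        apply Set.Finite.of_finite_image (f := r)
        · exact (Set.finite_Iic (r b)).subset (by rintro _ ⟨W, hW, rfl⟩; exact hW.2)
        · exact fun x hx y hy hxy => hrinj x (hVV₀ hx.1) y (hVV₀ hy.1) hxy
      have hSsub : S ⊆ V := fun W hW => hW.1
      refine ⟨V \ S, fun W hW => hV₀U (hVV₀ hW.1), omegaCover_diff hV hSsub hSfin, 0, ?_⟩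
      intro t ht htc
      obtain ⟨c, d, hcd, rfl⟩ := Finset.card_eq_two.mp htc
      have hc : c ∈ V \ S := ht (by simp)
      have hd : d ∈ V \ S := ht (by simp)
      have hrc : r b < r c := by
        by_contra h
        exact hc.2 ⟨hc.1, by omega⟩
      have hrd : r b < r d := by
        by_contra h
        exact hd.2 ⟨hd.1, by omega⟩
      have hrcd : r c ≠ r d := fun h => hcd (hrinj c (hVV₀ hc.1) d (hVV₀ hd.1) h)
      rcases lt_or_gt_of_ne hrcd with h | h
      · exact key b hb c hc.1 d hd.1 hrc h (key a ha b hb c hc.1 hab hrc hfab)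
      · rw [Finset.pair_comm]
        exact key b hb d hd.1 c hc.1 hrd h (key a ha b hb d hd.1 hab hrd hfab)
    · push_neg at hex
      refine ⟨V, fun W hW => hV₀U (hVV₀ hW), hV, 1, ?_⟩
      intro t ht htc
      obtain ⟨c, d, hcd, rfl⟩ := Finset.card_eq_two.mp htc
      have hc : c ∈ V := ht (by simp)
      have hd : d ∈ V := ht (by simp)
      have hrcd : r c ≠ r d := fun h => hcd (hrinj c (hVV₀ hc) d (hVV₀ hd) h)
      rcases lt_or_gt_of_ne hrcd with h | h
      · exact fin_two_eq_one (hex c hc d hd h)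
      · rw [Finset.pair_comm]
        exact fin_two_eq_one (hex d hd c hc h)
  · -- the 4-element side is impossible
    exfalso
    have hinj_s : ∀ a ∈ s, ∀ b ∈ s, r a = r b → a = b :=
      fun a ha b hb => hrinj a (hsV₀ ha) b (hsV₀ hb)
    obtain ⟨x, hx, y, hy, z, hz, w, hw, h1, h2, h3⟩ := exists_sorted4 r s hcard hinj_s
    have fact : ∀ a ∈ s, ∀ b ∈ s, ∀ c ∈ s, r a < r b → r b < r c →
        f {a, b} = 0 ∧ f {b, c} = 1 := by
      intro a ha b hb c hc hab hbc
      have hsub : ({a, b, c} : Finset (Set X)) ⊆ s := by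
        intro W hW
        simp only [Finset.mem_insert, Finset.mem_singleton] at hW
        rcases hW with rfl | rfl | rfl <;> assumption
      have h1t : (if P ({a, b, c} : Finset (Set X)) then (1 : Fin 2) else 0) = 1 :=
        htr {a, b, c} hsub (card3 a b c hab hbc)
      by_cases hPt : P ({a, b, c} : Finset (Set X))
      · obtain ⟨a', b', c', h1', h2', hset, hf0, hf1⟩ := hPt
        have hset' : ({a, b, c} : Set (Set X)) = {a', b', c'} := by
          rw [← hset]; simp
        obtain ⟨rfl, rfl, rfl⟩ := triple_sorted_unique r hset' hab hbc h1' h2'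
        exact ⟨hf0, hf1⟩
      · rw [if_neg hPt] at h1t
        exact absurd h1t (by decide)
    have h01 := (fact x hx y hy z hz h1 h2).2
    have h00 := (fact y hy z hz w hw h2 h3).1
    rw [h00] at h01
    exact absurd h01 (by decide)
end

section
/- Let X be a topological space such that every ω-cover of X contains a countable subfamily that is an ω-cover, and suppose X satisfies S₁(Ω,Γ). Then for all positive integers m and k the partition relation Ω → (Γ)^m_k holds, i.e., for every ω-cover U of X and every coloring f : [U]^m → {1,…,k} there is a subfamily V ⊆ U which is a γ-cover of X and on which f is constant on m-element subsets. -/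
def IsGammaCover {X : Type*} [TopologicalSpace X] (U : Set (Set X)) : Prop :=
  U.Infinite ∧ (∀ W ∈ U, IsOpen W) ∧ ∀ x : X, {W ∈ U | x ∉ W}.Finite

private lemma ramseyInf (k : ℕ) : ∀ (m : ℕ) (S : Set ℕ), S.Infinite → ∀ f : Finset ℕ → Fin k,
    ∃ T ⊆ S, T.Infinite ∧ ∃ c : Fin k, ∀ s : Finset ℕ, ↑s ⊆ T → s.card = m → f s = c := by
  intro m
  induction m with
  | zero =>
    intro S hS f
    refine ⟨S, subset_rfl, hS, f ∅, fun s _ hc => ?_⟩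
    rw [Finset.card_eq_zero] at hc; subst hc; rfl
  | succ m ih =>
    intro S hS f
    have step : ∀ S' : Set ℕ, S'.Infinite →
        ∃ T' : Set ℕ, T'.Infinite ∧ T' ⊆ S' ∩ Set.Ioi (sInf S') ∧
          ∃ c : Fin k, ∀ s : Finset ℕ, ↑s ⊆ T' → s.card = m →
            f (insert (sInf S') s) = c := by
      intro S' h
      have h2 : (S' ∩ Set.Ioi (sInf S')).Infinite := by
        have : S' \ Set.Iic (sInf S') = S' ∩ Set.Ioi (sInf S') := by
          rw [Set.diff_eq, Set.compl_Iic]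
        rw [← this]
        exact h.diff (Set.finite_Iic _)
      obtain ⟨T, hTs, hTi, c, hc⟩ := ih _ h2 (fun t => f (insert (sInf S') t))
      exact ⟨T, hTi, hTs, c, hc⟩
    choose nxt hinf hsub col hcol using step
    let g : ℕ → {S' : Set ℕ // S'.Infinite} := fun n =>
      Nat.rec ⟨S, hS⟩ (fun _ p => ⟨nxt p.1 p.2, hinf p.1 p.2⟩) n
    set a : ℕ → ℕ := fun n => sInf (g n).1 with ha
    have hstep : ∀ n, ((g (n+1)).1 : Set ℕ) ⊆ (g n).1 ∩ Set.Ioi (a n) :=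
      fun n => hsub (g n).1 (g n).2
    have hmono : ∀ i j, i ≤ j → ((g j).1 : Set ℕ) ⊆ (g i).1 := by
      intro i j hij
      induction j, hij using Nat.le_induction with
      | base => exact subset_rfl
      | succ n hn IH => exact fun x hx => IH ((hstep n hx).1)
    have hamem : ∀ n, a n ∈ (g n).1 := fun n => Nat.sInf_mem (g n).2.nonempty
    have haSM : StrictMono a := by
      apply strictMono_nat_of_lt_succ
      intro n
      exact (hstep n (hamem (n+1))).2
    set c' : ℕ → Fin k := fun n => col (g n).1 (g n).2 with hc'
    obtain ⟨cstar, hcs⟩ := Finite.exists_infinite_fiber c'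
    have hcs' : (c' ⁻¹' {cstar}).Infinite := Set.infinite_coe_iff.mp hcs
    set N : Set ℕ := c' ⁻¹' {cstar} with hN
    refine ⟨a '' N, ?_, hcs'.image (haSM.injective.injOn), cstar, ?_⟩
    · rintro x ⟨n, _, rfl⟩
      exact hmono 0 n (Nat.zero_le n) (hamem n)
    · intro s hs hcard
      have hpos : 0 < s.card := by omega
      rw [Finset.card_pos] at hpos
      have hb : s.min' hpos ∈ s := Finset.min'_mem s hpos
      obtain ⟨i, hiN, hai⟩ := hs hb
      set b := s.min' hpos
      have hes : ↑(s.erase b) ⊆ ((g (i+1)).1 : Set ℕ) := by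
        intro x hx
        rw [Finset.coe_erase] at hx
        obtain ⟨hxs, hxb⟩ := hx
        obtain ⟨j, hjN, haj⟩ := hs hxs
        have hbx : b < x := lt_of_le_of_ne (Finset.min'_le s x hxs) (by simpa [eq_comm] using hxb)
        have hij : i < j := by
          rw [← haSM.lt_iff_lt, hai, haj]; exact hbx
        exact hmono (i+1) j hij (haj ▸ hamem j)
      have hcarde : (s.erase b).card = m := by
        rw [Finset.card_erase_of_mem hb, hcard]; omega
      have hsb : sInf ((g i).1 : Set ℕ) = b := hai
      have := hcol (g i).1 (g i).2 (s.erase b) hes hcarde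
      rw [hsb, Finset.insert_erase hb] at this
      rw [this]
      exact hiN


/-- If every ω-cover has a countable ω-subcover and `S₁(Ω,Γ)` holds, then the partition
relation `Ω → (Γ)ᵐₖ` holds for all positive integers `m, k`. -/
theorem stmt17 {X : Type*} [TopologicalSpace X]
    (hctble : ∀ U : Set (Set X), IsOmegaCover U →
      ∃ V ⊆ U, V.Countable ∧ IsOmegaCover V)
    (hS1 : ∀ U : ℕ → Set (Set X), (∀ n, IsOmegaCover (U n)) →
      ∃ T : ℕ → Set X, (∀ n, T n ∈ U n) ∧ IsGammaCover {W | ∃ n, T n = W}) :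
    ∀ m k : ℕ, 0 < m → 0 < k →
      ∀ U : Set (Set X), IsOmegaCover U →
        ∀ f : Finset (Set X) → Fin k,
          ∃ V ⊆ U, IsGammaCover V ∧ ∃ c : Fin k,
            ∀ s : Finset (Set X), ↑s ⊆ V → s.card = m → f s = c := by
  intro m k _hm _hk U hU f
  classical
  obtain ⟨T, hTU, hG⟩ := hS1 (fun _ => U) (fun _ => hU)
  set G : Set (Set X) := {W | ∃ n, T n = W} with hGdef
  have hGU : G ⊆ U := by rintro W ⟨n, rfl⟩; exact hTU n
  have hGinf : G.Infinite := hG.1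
  set φ : ℕ → Set X := fun n => ((Set.Infinite.natEmbedding G hGinf) n : Set X) with hφ
  have hφinj : Function.Injective φ := fun i j h =>
    (Set.Infinite.natEmbedding G hGinf).injective (Subtype.ext h)
  have hφG : ∀ n, φ n ∈ G := fun n => ((Set.Infinite.natEmbedding G hGinf) n).2
  obtain ⟨N, -, hNinf, c, hc⟩ := ramseyInf k m Set.univ Set.infinite_univ
    (fun s => f (s.image φ))
  refine ⟨φ '' N, fun W hW => ?_, ⟨?_, ?_, ?_⟩, c, ?_⟩
  · obtain ⟨n, -, rfl⟩ := hW
    exact hGU (hφG n)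
  · exact hNinf.image hφinj.injOn
  · rintro W ⟨n, -, rfl⟩
    exact hG.2.1 _ (hφG n)
  · intro x
    apply (hG.2.2 x).subset
    rintro W ⟨⟨n, -, rfl⟩, hxW⟩
    exact ⟨hφG n, hxW⟩
  · intro s hs hcard
    classical
    have hsr : ∀ W ∈ s, W ∈ Set.range φ := by
      intro W hW
      obtain ⟨n, -, rfl⟩ := hs hW
      exact ⟨n, rfl⟩
    set t : Finset ℕ := s.preimage φ hφinj.injOn with ht
    have himg : t.image φ = s := by
      ext W
      simp only [ht, Finset.mem_image, Finset.mem_preimage]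
      constructor
      · rintro ⟨n, hn, rfl⟩; exact hn
      · intro hW
        obtain ⟨n, rfl⟩ := hsr W hW
        exact ⟨n, hW, rfl⟩
    have htN : (↑t : Set ℕ) ⊆ N := by
      intro n hn
      rw [Finset.mem_coe, ht, Finset.mem_preimage] at hn
      obtain ⟨j, hjN, hje⟩ := hs hn
      rwa [← hφinj hje]
    have htcard : t.card = m := by
      have : (t.image φ).card = t.card := Finset.card_image_of_injective t hφinj
      rw [himg, hcard] at this
      omega
    have := hc t htN htcard
    rwa [himg] at this
end

section
/- Let I be an index set and for each i ∈ I let G_i be a countable group with the discrete topology. Endow P = ∏_{i∈I} G_i with the product topology and let G = { f ∈ P : f(i) = identity for all but finitely many i } with the subspace topology. Then G is σ-compact, i.e., a countable union of compact subsets. -/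
/-- Corson's theorem for countable discrete groups: the direct sum subgroup
`{f ∈ ∏ᵢ Gᵢ : f(i) = 1 for all but finitely many i}` of a product of countable discrete
groups is σ-compact (in the product topology). -/
theorem stmt18 {I : Type*} (G : I → Type*) [∀ i, Group (G i)] [∀ i, Countable (G i)]
    [∀ i, TopologicalSpace (G i)] [∀ i, DiscreteTopology (G i)] :
    IsSigmaCompact {f : ∀ i, G i | {i | f i ≠ 1}.Finite} := by
  -- choose a surjective enumeration of each countable (nonempty) group
  have he : ∀ i, ∃ e : ℕ → G i, Function.Surjective e := fun i =>
    exists_surjective_nat (G i)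
  choose e he using he
  -- the compact pieces
  set S : ℕ → (i : I) → Set (G i) := fun n i => insert 1 (e i '' Set.Iic n) with hS
  set K : ℕ → Set (∀ i, G i) := fun n =>
    (Set.pi Set.univ (S n)) ∩
      {f | ∀ s : Finset I, (∀ i ∈ s, f i ≠ 1) → s.card ≤ n} with hK
  refine ⟨K, fun n => ?_, ?_⟩
  · -- compactness of K n
    have hSc : ∀ i, IsCompact (S n i) := fun i => by
      have : (S n i).Finite := (Set.finite_Iic n).image (e i) |>.insert 1
      exact this.isCompact
    have hpi : IsCompact (Set.pi Set.univ (S n)) := isCompact_univ_pi hSc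
    have hclosed : IsClosed {f : ∀ i, G i | ∀ s : Finset I, (∀ i ∈ s, f i ≠ 1) → s.card ≤ n} := by
      have heq : {f : ∀ i, G i | ∀ s : Finset I, (∀ i ∈ s, f i ≠ 1) → s.card ≤ n} =
          ⋂ (s : Finset I) (_ : n < s.card), ⋃ i ∈ s, {f : ∀ i, G i | f i = 1} := by
        ext f
        simp only [Set.mem_setOf_eq, Set.mem_iInter, Set.mem_iUnion, Set.mem_setOf_eq]
        constructor
        · intro h s hs
          by_contra hc
          push_neg at hc
          exact absurd (h s fun i hi => hc i hi) (not_le.2 hs)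
        · intro h s hs
          by_contra hc
          push_neg at hc
          obtain ⟨i, hi, hfi⟩ := h s hc
          exact hs i hi hfi
      rw [heq]
      refine isClosed_iInter fun s => isClosed_iInter fun _ => ?_
      refine Set.Finite.isClosed_biUnion s.finite_toSet fun i _ => ?_
      exact IsClosed.preimage (continuous_apply i) (isClosed_singleton (x := (1 : G i)))
    exact hpi.inter_right hclosed
  · -- the union of the K n is the σ-product
    ext f
    simp only [Set.mem_iUnion, Set.mem_setOf_eq]
    constructor
    · rintro ⟨n, -, hf2⟩
      by_contra hinf
      obtain ⟨t, hts, htc⟩ := (Set.Infinite.exists_subset_card_eq hinf (n + 1))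
      have := hf2 t fun i hi => hts hi
      omega
    · intro hf
      choose k hk using fun i => he i (f i)
      refine ⟨hf.toFinset.card ⊔ hf.toFinset.sup k, fun i _ => ?_, fun s hs => ?_⟩
      · by_cases h1 : f i = 1
        · exact Or.inl h1
        · refine Or.inr ⟨k i, Set.mem_Iic.2 ?_, hk i⟩
          have hi : i ∈ hf.toFinset := hf.mem_toFinset.2 h1
          exact le_trans (Finset.le_sup hi) le_sup_right
      · have hsub : s ⊆ hf.toFinset := fun i hi => hf.mem_toFinset.2 (hs i hi)
        exact le_trans (Finset.card_le_card hsub) le_sup_left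
end
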